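/- arXiv:1205.2439 — 11 statements merged into one kernel-verified Lean document; each statement's English description precedes it below -/
import Mathlib

section
/- For the group G = ℤ/6 ⊕ ℤ/6 (with k = 2, n₁ = n₂ = 6), the canonical-cover Diophantine system has no solution: there are no nonnegative integers x_{(α₁,α₂)} indexed by (α₁,α₂) ∈ ℤ/6 × ℤ/6, integers t₁, t₂, and nonzero g', with 6·t₁ = Σ_α α₁·x_α, 6·t₂ = Σ_α α₂·x_α, and for every nonzero (g₁,g₂), the integer g₁·t₁ + g₂·t₂ − Σ_α ⌊(g₁·α₁ + g₂·α₂)/6⌋·x_α equal to 4 if (g₁,g₂) = g' and 2 otherwise. -/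
/-- For the group `G = ℤ/6 ⊕ ℤ/6`, the canonical-cover Diophantine system has no
solution: there are no nonnegative integers `x α` (`α ∈ ℤ/6 × ℤ/6`), integers
`t₁, t₂`, and nonzero `g'`, with `6·t₁ = Σ α₁·x α`, `6·t₂ = Σ α₂·x α`, and for
every nonzero `g = (g₁,g₂)`, the integer
`g₁·t₁ + g₂·t₂ − Σ ⌊(g₁·α₁ + g₂·α₂)/6⌋·x α` equal to `4` if `g = g'`
and `2` otherwise. -/
theorem no_canonical_cover_solution_Z6xZ6 :
    ¬ ∃ (x : Fin 6 × Fin 6 → ℕ) (t₁ t₂ : ℤ) (g' : Fin 6 × Fin 6),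
        g' ≠ 0 ∧
        (6 * t₁ = ∑ α : Fin 6 × Fin 6, (α.1.val : ℤ) * (x α : ℤ)) ∧
        (6 * t₂ = ∑ α : Fin 6 × Fin 6, (α.2.val : ℤ) * (x α : ℤ)) ∧
        (∀ g : Fin 6 × Fin 6, g ≠ 0 →
          (g.1.val : ℤ) * t₁ + (g.2.val : ℤ) * t₂
              - ∑ α : Fin 6 × Fin 6,
                  ⌊((g.1.val : ℚ) * (α.1.val : ℚ)
                      + (g.2.val : ℚ) * (α.2.val : ℚ)) / 6⌋ * (x α : ℤ)
            = if g = g' then 4 else 2) := by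
  rintro ⟨x, t₁, t₂, g', hg', h1, h2, hL⟩
  classical
  let r : Fin 6 × Fin 6 → Fin 6 × Fin 6 → ℕ :=
    fun g α => (g.1.val * α.1.val + g.2.val * α.2.val) % 6
  -- key identity: 6 times each constraint, with the t-equations substituted
  have key : ∀ g : Fin 6 × Fin 6, g ≠ 0 →
      ∑ α : Fin 6 × Fin 6, (r g α : ℤ) * (x α : ℤ) = 6 * (if g = g' then 4 else 2) := by
    intro g hg
    have h := hL g hg
    have hfl : ∀ α : Fin 6 × Fin 6,
        ⌊((g.1.val : ℚ) * (α.1.val : ℚ) + (g.2.val : ℚ) * (α.2.val : ℚ)) / 6⌋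
          = ((g.1.val * α.1.val + g.2.val * α.2.val : ℕ) : ℤ) / (6 : ℤ) := by
      intro α
      have e : ((g.1.val : ℚ) * (α.1.val : ℚ) + (g.2.val : ℚ) * (α.2.val : ℚ))
          = (((g.1.val * α.1.val + g.2.val * α.2.val : ℕ) : ℤ) : ℚ) := by push_cast; ring
      rw [e, show (6 : ℚ) = ((6 : ℕ) : ℚ) by norm_num, Rat.floor_intCast_div_natCast]
      norm_num
    simp only [hfl] at h
    have E1 : ∑ α : Fin 6 × Fin 6,
          ((g.1.val * α.1.val + g.2.val * α.2.val : ℕ) : ℤ) * (x α : ℤ)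
        = (g.1.val : ℤ) * (6 * t₁) + (g.2.val : ℤ) * (6 * t₂) := by
      rw [h1, h2, Finset.mul_sum, Finset.mul_sum, ← Finset.sum_add_distrib]
      apply Finset.sum_congr rfl
      intro α _
      push_cast
      ring
    have E2 : ∑ α : Fin 6 × Fin 6, (r g α : ℤ) * (x α : ℤ)
        = ∑ α : Fin 6 × Fin 6,
            ((g.1.val * α.1.val + g.2.val * α.2.val : ℕ) : ℤ) * (x α : ℤ)
          - 6 * ∑ α : Fin 6 × Fin 6,
              (((g.1.val * α.1.val + g.2.val * α.2.val : ℕ) : ℤ) / (6:ℤ)) * (x α : ℤ) := by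
      rw [Finset.mul_sum, ← Finset.sum_sub_distrib]
      apply Finset.sum_congr rfl
      intro α _
      have hmod : (r g α : ℤ)
          = ((g.1.val * α.1.val + g.2.val * α.2.val : ℕ) : ℤ) % 6 := by
        simp [r, Int.natCast_mod]
      rw [hmod, Int.emod_def]
      ring
    rw [E2, E1]
    linarith [h]
  -- index sets
  let SA : Finset (Fin 6 × Fin 6) := Finset.univ.erase 0
  let SB : Finset (Fin 6 × Fin 6) :=
    {((3:Fin 6),(0:Fin 6)), ((0:Fin 6),(3:Fin 6)), ((3:Fin 6),(3:Fin 6))}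
  let SC : Finset (Fin 6 × Fin 6) :=
    {((2:Fin 6),(0:Fin 6)), ((4:Fin 6),(0:Fin 6)), ((0:Fin 6),(2:Fin 6)),
      ((0:Fin 6),(4:Fin 6)), ((2:Fin 6),(2:Fin 6)), ((2:Fin 6),(4:Fin 6)),
      ((4:Fin 6),(2:Fin 6)), ((4:Fin 6),(4:Fin 6))}
  have hAkey : ∑ g ∈ SA, ∑ α : Fin 6 × Fin 6, (r g α : ℤ) * (x α : ℤ)
      = ∑ g ∈ SA, 6 * (if g = g' then 4 else 2) :=
    Finset.sum_congr rfl fun g hg => key g (Finset.ne_of_mem_erase hg)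
  have hBkey : ∑ g ∈ SB, ∑ α : Fin 6 × Fin 6, (r g α : ℤ) * (x α : ℤ)
      = ∑ g ∈ SB, 6 * (if g = g' then 4 else 2) :=
    Finset.sum_congr rfl fun g hg => key g (by fin_cases hg <;> decide)
  have hCkey : ∑ g ∈ SC, ∑ α : Fin 6 × Fin 6, (r g α : ℤ) * (x α : ℤ)
      = ∑ g ∈ SC, 6 * (if g = g' then 4 else 2) :=
    Finset.sum_congr rfl fun g hg => key g (by fin_cases hg <;> decide)
  -- RHS values / bounds
  have hRA : ∑ g ∈ SA, (6 * (if g = g' then 4 else 2) : ℤ) = 432 := by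
    have hmem : g' ∈ SA := Finset.mem_erase.2 ⟨hg', Finset.mem_univ _⟩
    have e : ∀ g : Fin 6 × Fin 6, (6 * (if g = g' then 4 else 2) : ℤ)
        = 12 + (if g = g' then 12 else 0) := by
      intro g; split_ifs <;> norm_num
    rw [Finset.sum_congr rfl fun g _ => e g, Finset.sum_add_distrib,
      Finset.sum_ite_eq' SA g' (fun _ => (12:ℤ)), if_pos hmem, Finset.sum_const]
    have hcard : SA.card = 35 := by decide
    rw [hcard]
    norm_num
  have hRB : (36 : ℤ) ≤ ∑ g ∈ SB, 6 * (if g = g' then 4 else 2) := by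
    have e : ∀ g ∈ SB, (12 : ℤ) ≤ 6 * (if g = g' then 4 else 2) := by
      intro g _; split_ifs <;> norm_num
    calc (36:ℤ) = ∑ _g ∈ SB, 12 := by decide
    _ ≤ _ := Finset.sum_le_sum e
  have hRC : (96 : ℤ) ≤ ∑ g ∈ SC, 6 * (if g = g' then 4 else 2) := by
    have e : ∀ g ∈ SC, (12 : ℤ) ≤ 6 * (if g = g' then 4 else 2) := by
      intro g _; split_ifs <;> norm_num
    calc (96:ℤ) = ∑ _g ∈ SC, 12 := by decide
    _ ≤ _ := Finset.sum_le_sum e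
  -- swap order of summation
  have swap : ∀ S : Finset (Fin 6 × Fin 6),
      ∑ g ∈ S, ∑ α : Fin 6 × Fin 6, (r g α : ℤ) * (x α : ℤ)
        = ∑ α : Fin 6 × Fin 6, ((∑ g ∈ S, r g α : ℕ) : ℤ) * (x α : ℤ) := by
    intro S
    rw [Finset.sum_comm]
    apply Finset.sum_congr rfl
    intro α _
    rw [← Finset.sum_mul]
    push_cast
    rfl
  -- pointwise coefficient inequality (decidable check over the 36 elements)
  have hpt : ∀ α : Fin 6 × Fin 6,
      9 * (∑ g ∈ SB, r g α) + 2 * (∑ g ∈ SC, r g α) ≤ ∑ g ∈ SA, r g α := by decide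
  have hA : ∑ α : Fin 6 × Fin 6, ((∑ g ∈ SA, r g α : ℕ) : ℤ) * (x α : ℤ) = 432 := by
    rw [← swap SA, hAkey, hRA]
  have hB : (36 : ℤ) ≤ ∑ α : Fin 6 × Fin 6, ((∑ g ∈ SB, r g α : ℕ) : ℤ) * (x α : ℤ) := by
    rw [← swap SB, hBkey]; exact hRB
  have hC : (96 : ℤ) ≤ ∑ α : Fin 6 × Fin 6, ((∑ g ∈ SC, r g α : ℕ) : ℤ) * (x α : ℤ) := by
    rw [← swap SC, hCkey]; exact hRC
  have hcomb : 9 * (∑ α : Fin 6 × Fin 6, ((∑ g ∈ SB, r g α : ℕ) : ℤ) * (x α : ℤ))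
      + 2 * (∑ α : Fin 6 × Fin 6, ((∑ g ∈ SC, r g α : ℕ) : ℤ) * (x α : ℤ))
      ≤ ∑ α : Fin 6 × Fin 6, ((∑ g ∈ SA, r g α : ℕ) : ℤ) * (x α : ℤ) := by
    rw [Finset.mul_sum, Finset.mul_sum, ← Finset.sum_add_distrib]
    apply Finset.sum_le_sum
    intro α _
    have h := hpt α
    have hx : (0:ℤ) ≤ (x α : ℤ) := Int.natCast_nonneg _
    have hcast : ((9 * (∑ g ∈ SB, r g α) + 2 * (∑ g ∈ SC, r g α) : ℕ) : ℤ)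
        ≤ ((∑ g ∈ SA, r g α : ℕ) : ℤ) := by exact_mod_cast h
    have hm := mul_le_mul_of_nonneg_right hcast hx
    rw [Nat.cast_add, Nat.cast_mul, Nat.cast_mul, Nat.cast_ofNat, Nat.cast_ofNat] at hm
    linarith
  linarith [hA, hB, hC, hcomb]
end

section
/- For the group G = (ℤ/2)⁴, the canonical-cover Diophantine system has a solution. Explicitly, taking g' = (1,0,0,0), t = (t₁,t₂,t₃,t₄) = (4,2,2,2), and x_α = 1 for the eight elements α ∈ (ℤ/2)⁴ with first coordinate α₁ = 1 and x_α = 0 otherwise, one has 2·t_i = Σ_{α} α_i·x_α for i = 1,2,3,4, and for every nonzero g ∈ (ℤ/2)⁴ the integer Σ_i g_i·t_i − Σ_α ⌊(Σ_i g_i·α_i)/2⌋·x_α equals 4 if g = (1,0,0,0) and 2 otherwise. -/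
/-- For `G = (ℤ/2)⁴`, the canonical-cover Diophantine system has a solution: with
`g' = (1,0,0,0)`, `t = (4,2,2,2)`, and `x α = 1` exactly for the eight `α` with
`α₁ = 1`, one has `2·tᵢ = Σ αᵢ·x α` for each `i`, and for every nonzero `g` the
integer `Σᵢ gᵢ·tᵢ − Σ_α ⌊(Σᵢ gᵢ·αᵢ)/2⌋·x α` equals `4` if `g = (1,0,0,0)` and `2`
otherwise.  (This is Persson's degree-16 surface.) -/
theorem canonical_cover_solution_Z2pow4 :
    let x : (Fin 4 → Fin 2) → ℕ := fun α => if α 0 = 1 then 1 else 0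
    let t : Fin 4 → ℤ := fun i => if i = 0 then 4 else 2
    let g' : Fin 4 → Fin 2 := fun i => if i = 0 then 1 else 0
    (∀ i : Fin 4, 2 * t i = ∑ α : Fin 4 → Fin 2, ((α i).val : ℤ) * (x α : ℤ)) ∧
    (∀ g : Fin 4 → Fin 2, g ≠ 0 →
      (∑ i : Fin 4, ((g i).val : ℤ) * t i)
          - ∑ α : Fin 4 → Fin 2,
              ⌊(∑ i : Fin 4, ((g i).val : ℚ) * ((α i).val : ℚ)) / 2⌋ * (x α : ℤ)
        = if g = g' then 4 else 2) := by
  intro x t g'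
  have key : ∀ g α : Fin 4 → Fin 2,
      ⌊(∑ i : Fin 4, ((g i).val : ℚ) * ((α i).val : ℚ)) / 2⌋
        = (∑ i : Fin 4, ((g i).val : ℤ) * ((α i).val : ℤ)) / 2 := by
    intro g α
    have : (∑ i : Fin 4, ((g i).val : ℚ) * ((α i).val : ℚ))
        = ((∑ i : Fin 4, ((g i).val : ℤ) * ((α i).val : ℤ) : ℤ) : ℚ) := by
      push_cast; rfl
    rw [this, show ((2:ℚ)) = ((2:ℕ):ℚ) by norm_num,
      Rat.floor_intCast_div_natCast]
    norm_num
  constructor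
  · decide
  · intro g hg
    simp only [key]
    revert hg
    revert g
    decide
end

section
/- For the cyclic group G = ℤ/16 (with k = 1, n₁ = 16), the canonical-cover Diophantine system has no solution: there are no nonnegative integers x₀,...,x₁₅, integer t₁, and g' ∈ {1,...,15} such that 16·t₁ = Σ_{α=0}^{15} α·x_α and, for every g ∈ {1,...,15}, the integer g·t₁ − Σ_{α=0}^{15} ⌊g·α/16⌋·x_α equals 4 if g = g' and 2 otherwise. -/
set_option maxHeartbeats 4000000 in
/-- For the cyclic group `ℤ/16`, the canonical-cover Diophantine system has no solution:
there are no nonnegative integers `x α` (`α = 0,...,15`), integer `t`, and nonzero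
`g'` such that `16·t = Σ α·x α` and, for every nonzero `g`, the integer
`g·t − Σ ⌊g·α/16⌋·x α` equals `4` if `g = g'` and `2` otherwise. -/
theorem no_canonical_cover_solution_Z16 :
    ¬ ∃ (x : Fin 16 → ℕ) (t : ℤ) (g' : Fin 16),
        g' ≠ 0 ∧
        (16 * t = ∑ α : Fin 16, (α.val : ℤ) * (x α : ℤ)) ∧
        (∀ g : Fin 16, g ≠ 0 →
          (g.val : ℤ) * t
              - ∑ α : Fin 16, ⌊((g.val : ℚ) * (α.val : ℚ)) / 16⌋ * (x α : ℤ)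
            = if g = g' then 4 else 2) := by
  rintro ⟨x, t, g', hg', hsum, hL⟩
  have h1 := hL ⟨1, by norm_num⟩ (by decide)
  have h2 := hL ⟨2, by norm_num⟩ (by decide)
  have h3 := hL ⟨3, by norm_num⟩ (by decide)
  have h4 := hL ⟨4, by norm_num⟩ (by decide)
  have h5 := hL ⟨5, by norm_num⟩ (by decide)
  have h6 := hL ⟨6, by norm_num⟩ (by decide)
  have h7 := hL ⟨7, by norm_num⟩ (by decide)
  have h8 := hL ⟨8, by norm_num⟩ (by decide)
  have h9 := hL ⟨9, by norm_num⟩ (by decide)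
  have h10 := hL ⟨10, by norm_num⟩ (by decide)
  have h11 := hL ⟨11, by norm_num⟩ (by decide)
  have h12 := hL ⟨12, by norm_num⟩ (by decide)
  have h13 := hL ⟨13, by norm_num⟩ (by decide)
  have h14 := hL ⟨14, by norm_num⟩ (by decide)
  have h15 := hL ⟨15, by norm_num⟩ (by decide)
  clear hL
  obtain ⟨v, hv⟩ := g'
  simp only [Fin.sum_univ_succ, Fin.sum_univ_zero, Fin.val_succ, Fin.val_zero,
    Fin.mk.injEq, Fin.ne_iff_vne, Fin.val_mk] at hsum hg' h1 h2 h3 h4 h5 h6 h7 h8 h9 h10 h11 h12 h13 h14 h15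
  norm_num at hsum h1 h2 h3 h4 h5 h6 h7 h8 h9 h10 h11 h12 h13 h14 h15
  interval_cases v <;> simp only [Nat.reduceEqDiff, reduceIte] at h1 h2 h3 h4 h5 h6 h7 h8 h9 h10 h11 h12 h13 h14 h15 <;> omega
end

section
/- For the group G = ℤ/2 ⊕ ℤ/8 (with k = 2, n₁ = 2, n₂ = 8), the canonical-cover Diophantine system has no solution: there are no nonnegative integers x_{(α₁,α₂)} indexed by ℤ/2 × ℤ/8, integers t₁, t₂, and nonzero g', with 2·t₁ = Σ_α α₁·x_α, 8·t₂ = Σ_α α₂·x_α, and for every nonzero (g₁,g₂), the integer g₁·t₁ + g₂·t₂ − Σ_α ⌊(4·g₁·α₁ + g₂·α₂)/8⌋·x_α equal to 4 if (g₁,g₂) = g' and 2 otherwise. -/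
private def Lfun (x : Fin 2 × Fin 8 → ℕ) (t₁ t₂ : ℤ) (g : Fin 2 × Fin 8) : ℤ :=
  (g.1.val : ℤ) * t₁ + (g.2.val : ℤ) * t₂
    - ∑ α : Fin 2 × Fin 8,
        ⌊(4 * (g.1.val : ℚ) * (α.1.val : ℚ) + (g.2.val : ℚ) * (α.2.val : ℚ)) / 8⌋ * (x α : ℤ)

private lemma fv2 : ((2:Fin 8).val) = 2 := rfl
private lemma fv3 : ((3:Fin 8).val) = 3 := rfl
private lemma fv4 : ((4:Fin 8).val) = 4 := rfl
private lemma fv5 : ((5:Fin 8).val) = 5 := rfl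
private lemma fv6 : ((6:Fin 8).val) = 6 := rfl
private lemma fv7 : ((7:Fin 8).val) = 7 := rfl

set_option maxHeartbeats 2000000 in
/-- For the group `G = ℤ/2 ⊕ ℤ/8`, the canonical-cover Diophantine system has no
solution: there are no nonnegative integers `x α` (`α ∈ ℤ/2 × ℤ/8`), integers
`t₁, t₂`, and nonzero `g'`, with `2·t₁ = Σ α₁·x α`, `8·t₂ = Σ α₂·x α`, and for
every nonzero `g = (g₁,g₂)`, the integer
`g₁·t₁ + g₂·t₂ − Σ ⌊(4 * g₁·α₁ + g₂·α₂)/8⌋·x α` equal to `4` if `g = g'`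
and `2` otherwise. -/
theorem no_canonical_cover_solution_Z2xZ8 :
    ¬ ∃ (x : Fin 2 × Fin 8 → ℕ) (t₁ t₂ : ℤ) (g' : Fin 2 × Fin 8),
        g' ≠ 0 ∧
        (2 * t₁ = ∑ α : Fin 2 × Fin 8, (α.1.val : ℤ) * (x α : ℤ)) ∧
        (8 * t₂ = ∑ α : Fin 2 × Fin 8, (α.2.val : ℤ) * (x α : ℤ)) ∧
        (∀ g : Fin 2 × Fin 8, g ≠ 0 →
          (g.1.val : ℤ) * t₁ + (g.2.val : ℤ) * t₂
              - ∑ α : Fin 2 × Fin 8,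
                  ⌊(4 * (g.1.val : ℚ) * (α.1.val : ℚ)
                      + (g.2.val : ℚ) * (α.2.val : ℚ)) / 8⌋ * (x α : ℤ)
            = if g = g' then 4 else 2) := by
  rintro ⟨x, t₁, t₂, g', hg', h1, h2, h⟩
  have h' : ∀ g : Fin 2 × Fin 8, g ≠ 0 → Lfun x t₁ t₂ g = if g = g' then 4 else 2 :=
    fun g hg => h g hg
  have hB : ∀ g : Fin 2 × Fin 8, g ≠ 0 →
      2 ≤ Lfun x t₁ t₂ g := by
    intro g hg
    have := h' g hg
    split_ifs at this <;> omega
  have F1 : Lfun x t₁ t₂ (0,1) + Lfun x t₁ t₂ (0,7) = 4 ∨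
      Lfun x t₁ t₂ (0,3) + Lfun x t₁ t₂ (0,5) = 4 := by
    by_cases hc : g' = (0,1) ∨ g' = (0,7)
    · right
      rw [h' (0,3) (by decide), h' (0,5) (by decide)]
      rcases hc with rfl | rfl <;>
        rw [if_neg (by decide), if_neg (by decide)] <;> norm_num
    · left
      rw [h' (0,1) (by decide), h' (0,7) (by decide),
        if_neg (fun he => hc (Or.inl he.symm)), if_neg (fun he => hc (Or.inr he.symm))]
      norm_num
  have F2 : Lfun x t₁ t₂ (1,1) + Lfun x t₁ t₂ (1,7) = 4 ∨
      Lfun x t₁ t₂ (1,3) + Lfun x t₁ t₂ (1,5) = 4 := by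
    by_cases hc : g' = (1,1) ∨ g' = (1,7)
    · right
      rw [h' (1,3) (by decide), h' (1,5) (by decide)]
      rcases hc with rfl | rfl <;>
        rw [if_neg (by decide), if_neg (by decide)] <;> norm_num
    · left
      rw [h' (1,1) (by decide), h' (1,7) (by decide),
        if_neg (fun he => hc (Or.inl he.symm)), if_neg (fun he => hc (Or.inr he.symm))]
      norm_num
  have b02 := hB (0,2) (by decide)
  have b06 := hB (0,6) (by decide)
  have b12 := hB (1,2) (by decide)
  have b16 := hB (1,6) (by decide)
  have b10 := hB (1,0) (by decide)
  have b14 := hB (1,4) (by decide)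
  simp only [Lfun] at F1 F2 b02 b06 b12 b16 b10 b14
  norm_num [Fintype.sum_prod_type, Fin.sum_univ_eight, Fin.sum_univ_two,
    fv2, fv3, fv4, fv5, fv6, fv7] at F1 F2 b02 b06 b12 b16 b10 b14 h1 h2
  rcases F1 with F1 | F1 <;> rcases F2 with F2 | F2 <;> omega
end

section
/- For the group G = ℤ/4 ⊕ ℤ/4 (with k = 2, n₁ = n₂ = 4), the canonical-cover Diophantine system has no solution: there are no nonnegative integers x_{(α₁,α₂)} indexed by ℤ/4 × ℤ/4, integers t₁, t₂, and nonzero g', with 4·t₁ = Σ_α α₁·x_α, 4·t₂ = Σ_α α₂·x_α, and for every nonzero (g₁,g₂), the integer g₁·t₁ + g₂·t₂ − Σ_α ⌊(g₁·α₁ + g₂·α₂)/4⌋·x_α equal to 4 if (g₁,g₂) = g' and 2 otherwise. -/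
private lemma flr4 (a b c d : ℕ) :
    ⌊((a : ℚ) * (c : ℚ) + (b : ℚ) * (d : ℚ)) / 4⌋ = ((a * c + b * d : ℕ) : ℤ) / 4 := by
  have h : ((a : ℚ) * c + (b : ℚ) * d) = (((a * c + b * d : ℕ) : ℤ) : ℚ) := by push_cast; ring
  rw [h, show (4 : ℚ) = ((4 : ℕ) : ℚ) by norm_num, Rat.floor_intCast_div_natCast]
  norm_num

private lemma hub32 : ∀ p : Fin 4 × Fin 4, p ≠ 0 → (if ((0 : Fin 4), (1 : Fin 4)) = p then (4:ℤ) else 2) + (if ((0 : Fin 4), (2 : Fin 4)) = p then (4:ℤ) else 2) + (if ((0 : Fin 4), (3 : Fin 4)) = p then (4:ℤ) else 2) + (if ((1 : Fin 4), (0 : Fin 4)) = p then (4:ℤ) else 2) + (if ((1 : Fin 4), (1 : Fin 4)) = p then (4:ℤ) else 2) + (if ((1 : Fin 4), (2 : Fin 4)) = p then (4:ℤ) else 2) + (if ((1 : Fin 4), (3 : Fin 4)) = p then (4:ℤ) else 2) + (if ((2 : Fin 4), (0 : Fin 4)) = p then (4:ℤ) else 2) + (if ((2 : Fin 4), (1 :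 Fin 4)) = p then (4:ℤ) else 2) + (if ((2 : Fin 4), (2 : Fin 4)) = p then (4:ℤ) else 2) + (if ((2 : Fin 4), (3 : Fin 4)) = p then (4:ℤ) else 2) + (if ((3 : Fin 4), (0 : Fin 4)) = p then (4:ℤ) else 2) + (if ((3 : Fin 4), (1 : Fin 4)) = p then (4:ℤ) else 2) + (if ((3 : Fin 4), (2 : Fin 4)) = p then (4:ℤ) else 2) + (if ((3 : Fin 4), (3 : Fin 4)) = p then (4:ℤ) else 2) = 32 := by decide

set_option maxHeartbeats 4000000 in
/-- For the group `G = ℤ/4 ⊕ ℤ/4`, the canonical-cover Diophantine system has no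
solution: there are no nonnegative integers `x α` (`α ∈ ℤ/4 × ℤ/4`), integers
`t₁, t₂`, and nonzero `g'`, with `4·t₁ = Σ α₁·x α`, `4·t₂ = Σ α₂·x α`, and for
every nonzero `g = (g₁,g₂)`, the integer
`g₁·t₁ + g₂·t₂ − Σ ⌊(g₁·α₁ + g₂·α₂)/4⌋·x α` equal to `4` if `g = g'`
and `2` otherwise. -/
theorem no_canonical_cover_solution_Z4xZ4 :
    ¬ ∃ (x : Fin 4 × Fin 4 → ℕ) (t₁ t₂ : ℤ) (g' : Fin 4 × Fin 4),
        g' ≠ 0 ∧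
        (4 * t₁ = ∑ α : Fin 4 × Fin 4, (α.1.val : ℤ) * (x α : ℤ)) ∧
        (4 * t₂ = ∑ α : Fin 4 × Fin 4, (α.2.val : ℤ) * (x α : ℤ)) ∧
        (∀ g : Fin 4 × Fin 4, g ≠ 0 →
          (g.1.val : ℤ) * t₁ + (g.2.val : ℤ) * t₂
              - ∑ α : Fin 4 × Fin 4,
                  ⌊((g.1.val : ℚ) * (α.1.val : ℚ)
                      + (g.2.val : ℚ) * (α.2.val : ℚ)) / 4⌋ * (x α : ℤ)
            = if g = g' then 4 else 2) := by
  rintro ⟨x, t₁, t₂, g', hg', h1, h2, h3⟩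
  have hv2 : ((2 : Fin 4) : ℕ) = 2 := rfl
  have hv3 : ((3 : Fin 4) : ℕ) = 3 := rfl
  simp only [Fintype.sum_prod_type, Fin.sum_univ_four] at h1 h2
  norm_num [Fin.val_zero, Fin.val_one, hv2, hv3] at h1 h2
  have e01 := h3 ((0 : Fin 4), (1 : Fin 4)) (by decide)
  simp only [Fintype.sum_prod_type, Fin.sum_univ_four] at e01
  simp only [flr4] at e01
  norm_num [Fin.val_zero, Fin.val_one, hv2, hv3] at e01
  have e02 := h3 ((0 : Fin 4), (2 : Fin 4)) (by decide)
  simp only [Fintype.sum_prod_type, Fin.sum_univ_four] at e02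
  simp only [flr4] at e02
  norm_num [Fin.val_zero, Fin.val_one, hv2, hv3] at e02
  have e03 := h3 ((0 : Fin 4), (3 : Fin 4)) (by decide)
  simp only [Fintype.sum_prod_type, Fin.sum_univ_four] at e03
  simp only [flr4] at e03
  norm_num [Fin.val_zero, Fin.val_one, hv2, hv3] at e03
  have e10 := h3 ((1 : Fin 4), (0 : Fin 4)) (by decide)
  simp only [Fintype.sum_prod_type, Fin.sum_univ_four] at e10
  simp only [flr4] at e10
  norm_num [Fin.val_zero, Fin.val_one, hv2, hv3] at e10
  have e11 := h3 ((1 : Fin 4), (1 : Fin 4)) (by decide)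
  simp only [Fintype.sum_prod_type, Fin.sum_univ_four] at e11
  simp only [flr4] at e11
  norm_num [Fin.val_zero, Fin.val_one, hv2, hv3] at e11
  have e12 := h3 ((1 : Fin 4), (2 : Fin 4)) (by decide)
  simp only [Fintype.sum_prod_type, Fin.sum_univ_four] at e12
  simp only [flr4] at e12
  norm_num [Fin.val_zero, Fin.val_one, hv2, hv3] at e12
  have e13 := h3 ((1 : Fin 4), (3 : Fin 4)) (by decide)
  simp only [Fintype.sum_prod_type, Fin.sum_univ_four] at e13
  simp only [flr4] at e13
  norm_num [Fin.val_zero, Fin.val_one, hv2, hv3] at e13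
  have e20 := h3 ((2 : Fin 4), (0 : Fin 4)) (by decide)
  simp only [Fintype.sum_prod_type, Fin.sum_univ_four] at e20
  simp only [flr4] at e20
  norm_num [Fin.val_zero, Fin.val_one, hv2, hv3] at e20
  have e21 := h3 ((2 : Fin 4), (1 : Fin 4)) (by decide)
  simp only [Fintype.sum_prod_type, Fin.sum_univ_four] at e21
  simp only [flr4] at e21
  norm_num [Fin.val_zero, Fin.val_one, hv2, hv3] at e21
  have e22 := h3 ((2 : Fin 4), (2 : Fin 4)) (by decide)
  simp only [Fintype.sum_prod_type, Fin.sum_univ_four] at e22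
  simp only [flr4] at e22
  norm_num [Fin.val_zero, Fin.val_one, hv2, hv3] at e22
  have e23 := h3 ((2 : Fin 4), (3 : Fin 4)) (by decide)
  simp only [Fintype.sum_prod_type, Fin.sum_univ_four] at e23
  simp only [flr4] at e23
  norm_num [Fin.val_zero, Fin.val_one, hv2, hv3] at e23
  have e30 := h3 ((3 : Fin 4), (0 : Fin 4)) (by decide)
  simp only [Fintype.sum_prod_type, Fin.sum_univ_four] at e30
  simp only [flr4] at e30
  norm_num [Fin.val_zero, Fin.val_one, hv2, hv3] at e30
  have e31 := h3 ((3 : Fin 4), (1 : Fin 4)) (by decide)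
  simp only [Fintype.sum_prod_type, Fin.sum_univ_four] at e31
  simp only [flr4] at e31
  norm_num [Fin.val_zero, Fin.val_one, hv2, hv3] at e31
  have e32 := h3 ((3 : Fin 4), (2 : Fin 4)) (by decide)
  simp only [Fintype.sum_prod_type, Fin.sum_univ_four] at e32
  simp only [flr4] at e32
  norm_num [Fin.val_zero, Fin.val_one, hv2, hv3] at e32
  have e33 := h3 ((3 : Fin 4), (3 : Fin 4)) (by decide)
  simp only [Fintype.sum_prod_type, Fin.sum_univ_four] at e33
  simp only [flr4] at e33
  norm_num [Fin.val_zero, Fin.val_one, hv2, hv3] at e33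
  clear h3
  have lb : ∀ p : Fin 4 × Fin 4, (2:ℤ) ≤ if p = g' then 4 else 2 := by
    intro p; split <;> norm_num
  set r01 : ℤ := (if ((0 : Fin 4), (1 : Fin 4)) = g' then 4 else 2) with hr01
  set r02 : ℤ := (if ((0 : Fin 4), (2 : Fin 4)) = g' then 4 else 2) with hr02
  set r03 : ℤ := (if ((0 : Fin 4), (3 : Fin 4)) = g' then 4 else 2) with hr03
  set r10 : ℤ := (if ((1 : Fin 4), (0 : Fin 4)) = g' then 4 else 2) with hr10
  set r11 : ℤ := (if ((1 : Fin 4), (1 : Fin 4)) = g' then 4 else 2) with hr11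
  set r12 : ℤ := (if ((1 : Fin 4), (2 : Fin 4)) = g' then 4 else 2) with hr12
  set r13 : ℤ := (if ((1 : Fin 4), (3 : Fin 4)) = g' then 4 else 2) with hr13
  set r20 : ℤ := (if ((2 : Fin 4), (0 : Fin 4)) = g' then 4 else 2) with hr20
  set r21 : ℤ := (if ((2 : Fin 4), (1 : Fin 4)) = g' then 4 else 2) with hr21
  set r22 : ℤ := (if ((2 : Fin 4), (2 : Fin 4)) = g' then 4 else 2) with hr22
  set r23 : ℤ := (if ((2 : Fin 4), (3 : Fin 4)) = g' then 4 else 2) with hr23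
  set r30 : ℤ := (if ((3 : Fin 4), (0 : Fin 4)) = g' then 4 else 2) with hr30
  set r31 : ℤ := (if ((3 : Fin 4), (1 : Fin 4)) = g' then 4 else 2) with hr31
  set r32 : ℤ := (if ((3 : Fin 4), (2 : Fin 4)) = g' then 4 else 2) with hr32
  set r33 : ℤ := (if ((3 : Fin 4), (3 : Fin 4)) = g' then 4 else 2) with hr33
  have hub : r01 + r02 + r03 + r10 + r11 + r12 + r13 + r20 + r21 + r22 + r23 + r30 + r31 + r32 + r33 = 32 := by
    simp only [hr01, hr02, hr03, hr10, hr11, hr12, hr13, hr20, hr21, hr22, hr23, hr30, hr31, hr32, hr33]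
    exact hub32 g' hg'
  have lb01 : (2:ℤ) ≤ r01 := hr01 ▸ lb _
  have lb02 : (2:ℤ) ≤ r02 := hr02 ▸ lb _
  have lb03 : (2:ℤ) ≤ r03 := hr03 ▸ lb _
  have lb10 : (2:ℤ) ≤ r10 := hr10 ▸ lb _
  have lb11 : (2:ℤ) ≤ r11 := hr11 ▸ lb _
  have lb12 : (2:ℤ) ≤ r12 := hr12 ▸ lb _
  have lb13 : (2:ℤ) ≤ r13 := hr13 ▸ lb _
  have lb20 : (2:ℤ) ≤ r20 := hr20 ▸ lb _
  have lb21 : (2:ℤ) ≤ r21 := hr21 ▸ lb _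
  have lb22 : (2:ℤ) ≤ r22 := hr22 ▸ lb _
  have lb23 : (2:ℤ) ≤ r23 := hr23 ▸ lb _
  have lb30 : (2:ℤ) ≤ r30 := hr30 ▸ lb _
  have lb31 : (2:ℤ) ≤ r31 := hr31 ▸ lb _
  have lb32 : (2:ℤ) ≤ r32 := hr32 ▸ lb _
  have lb33 : (2:ℤ) ≤ r33 := hr33 ▸ lb _
  have nn : ∀ p : Fin 4 × Fin 4, (0:ℤ) ≤ (x p : ℤ) := fun p => Int.natCast_nonneg _
  linarith [e01, e02, e03, e10, e11, e12, e13, e20, e21, e22, e23, e30, e31, e32, e33, hub, lb01, lb02, lb03, lb10, lb11, lb12, lb13, lb20, lb21, lb22, lb23, lb30, lb31, lb32, lb33, nn 0, nn 1, nn ((0 : Fin 4), (0 : Fin 4)), nn ((0 : Fin 4), (1 : Fin 4)), nn ((0 : Fin 4), (2 : Fin 4)), nn ((0 : Fin 4), (3 : Fin 4)), nn ((1 : Fin 4), (0 : Fin 4)), nn ((1 : Fin 4), (1 : Fin 4)), nn ((1 : Fin 4), (2 : Fin 4)), nn ((1 : Fin 4), (3 : Fin 4)), nn ((2 : Fin 4),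 (0 : Fin 4)), nn ((2 : Fin 4), (1 : Fin 4)), nn ((2 : Fin 4), (2 : Fin 4)), nn ((2 : Fin 4), (3 : Fin 4)), nn ((3 : Fin 4), (0 : Fin 4)), nn ((3 : Fin 4), (1 : Fin 4)), nn ((3 : Fin 4), (2 : Fin 4)), nn ((3 : Fin 4), (3 : Fin 4))]
end

section
/- For the group G = ℤ/3 ⊕ ℤ/3, the canonical-cover Diophantine system has a solution. Explicitly, taking g' = (0,2), t₁ = t₂ = 2, and x_{(1,1)} = x_{(2,1)} = x_{(0,1)} = 2 with x_α = 0 for all other α ∈ ℤ/3 × ℤ/3, one has 3·t₁ = Σ_α α₁·x_α, 3·t₂ = Σ_α α₂·x_α, and for every nonzero (g₁,g₂) ∈ ℤ/3 × ℤ/3 the integer 2·g₁ + 2·g₂ − Σ_α ⌊(g₁·α₁ + g₂·α₂)/3⌋·x_α equals 4 if (g₁,g₂) = (0,2) and 2 otherwise. -/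
/-- For `G = ℤ/3 ⊕ ℤ/3`, the canonical-cover Diophantine system has a solution: with
`g' = (0,2)`, `t₁ = t₂ = 2`, `x (1,1) = x (2,1) = x (0,1) = 2` and `x α = 0`
otherwise, one has `3·t₁ = Σ α₁·x α`, `3·t₂ = Σ α₂·x α`, and for every nonzero
`(g₁,g₂)` the integer `2·g₁ + 2·g₂ − Σ ⌊(g₁·α₁ + g₂·α₂)/3⌋·x α` equals `4` if
`(g₁,g₂) = (0,2)` and `2` otherwise.  (This is the degree-9 cover
`z₁³ = a₁a₂², z₂³ = a₁a₂a₃`.) -/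
theorem canonical_cover_solution_Z3xZ3 :
    let x : Fin 3 × Fin 3 → ℕ :=
      fun α => if α = (1, 1) ∨ α = (2, 1) ∨ α = (0, 1) then 2 else 0
    (3 * (2 : ℤ) = ∑ α : Fin 3 × Fin 3, (α.1.val : ℤ) * (x α : ℤ)) ∧
    (3 * (2 : ℤ) = ∑ α : Fin 3 × Fin 3, (α.2.val : ℤ) * (x α : ℤ)) ∧
    (∀ g : Fin 3 × Fin 3, g ≠ 0 →
      2 * (g.1.val : ℤ) + 2 * (g.2.val : ℤ)
          - ∑ α : Fin 3 × Fin 3,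
              ⌊((g.1.val : ℚ) * (α.1.val : ℚ)
                  + (g.2.val : ℚ) * (α.2.val : ℚ)) / 3⌋ * (x α : ℤ)
        = if g = ((0 : Fin 3), (2 : Fin 3)) then 4 else 2) := by
  refine ⟨by decide, by decide, ?_⟩
  intro g hg
  fin_cases g <;> simp_all <;> norm_num [Fintype.sum_prod_type, Fin.sum_univ_succ, Prod.ext_iff] <;> decide
end

section
/- For the cyclic group G = ℤ/9 (with k = 1, n₁ = 9), the canonical-cover Diophantine system has no solution: there are no nonnegative integers x₀,...,x₈, integer t₁, and g' ∈ {1,...,8} such that 9·t₁ = Σ_{α=0}^{8} α·x_α and, for every g ∈ {1,...,8}, the integer g·t₁ − Σ_{α=0}^{8} ⌊g·α/9⌋·x_α equals 4 if g = g' and 2 otherwise. -/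
set_option maxHeartbeats 2000000 in
/-- For the cyclic group `ℤ/9`, the canonical-cover Diophantine system has no solution:
there are no nonnegative integers `x α` (`α = 0,...,8`), integer `t`, and nonzero
`g'` such that `9·t = Σ α·x α` and, for every nonzero `g`, the integer
`g·t − Σ ⌊g·α/9⌋·x α` equals `4` if `g = g'` and `2` otherwise. -/
theorem no_canonical_cover_solution_Z9 :
    ¬ ∃ (x : Fin 9 → ℕ) (t : ℤ) (g' : Fin 9),
        g' ≠ 0 ∧
        (9 * t = ∑ α : Fin 9, (α.val : ℤ) * (x α : ℤ)) ∧
        (∀ g : Fin 9, g ≠ 0 →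
          (g.val : ℤ) * t
              - ∑ α : Fin 9, ⌊((g.val : ℚ) * (α.val : ℚ)) / 9⌋ * (x α : ℤ)
            = if g = g' then 4 else 2) := by
  rintro ⟨x, t, g', hg', hsum, hL⟩
  have h1 := hL 1 (by decide)
  have h2 := hL 2 (by decide)
  have h3 := hL 3 (by decide)
  have h4 := hL 4 (by decide)
  have h5 := hL 5 (by decide)
  have h6 := hL 6 (by decide)
  have h7 := hL 7 (by decide)
  have h8 := hL 8 (by decide)
  norm_num [Fin.sum_univ_succ,
    show ((1:Fin 9).val) = 1 from rfl, show ((2:Fin 9).val) = 2 from rfl,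
    show ((3:Fin 9).val) = 3 from rfl, show ((4:Fin 9).val) = 4 from rfl,
    show ((5:Fin 9).val) = 5 from rfl, show ((6:Fin 9).val) = 6 from rfl,
    show ((7:Fin 9).val) = 7 from rfl, show ((8:Fin 9).val) = 8 from rfl]
    at hsum h1 h2 h3 h4 h5 h6 h7 h8
  fin_cases g' <;> simp_all <;> omega
end

section
/- For the group G = (ℤ/2)³, the canonical-cover Diophantine system has a solution. Explicitly, taking g' = (1,1,1), t₁ = t₂ = t₃ = 2, and x_{(1,0,0)} = x_{(0,1,0)} = x_{(0,0,1)} = x_{(1,1,1)} = 2 with x_α = 0 for all other α ∈ (ℤ/2)³, one has 2·t_i = Σ_α α_i·x_α for i = 1,2,3, and for every nonzero g ∈ (ℤ/2)³ the integer 2·(g₁+g₂+g₃) − Σ_α ⌊(g₁·α₁ + g₂·α₂ + g₃·α₃)/2⌋·x_α equals 4 if g = (1,1,1) and 2 otherwise. -/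
lemma sum8_fin3fin2 (f : (Fin 3 → Fin 2) → ℤ) :
    ∑ α, f α = f ![0,0,0] + f ![0,0,1] + f ![0,1,0] + f ![0,1,1]
      + f ![1,0,0] + f ![1,0,1] + f ![1,1,0] + f ![1,1,1] := by
  have h : (Finset.univ : Finset (Fin 3 → Fin 2)) =
      {![0,0,0], ![0,0,1], ![0,1,0], ![0,1,1], ![1,0,0], ![1,0,1], ![1,1,0], ![1,1,1]} := by
    decide
  rw [h, Finset.sum_insert (by decide), Finset.sum_insert (by decide),
    Finset.sum_insert (by decide), Finset.sum_insert (by decide),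
    Finset.sum_insert (by decide), Finset.sum_insert (by decide),
    Finset.sum_insert (by decide), Finset.sum_singleton]
  ring

/-- For `G = (ℤ/2)³`, the canonical-cover Diophantine system has a solution: with
`g' = (1,1,1)`, `t₁ = t₂ = t₃ = 2`, `x (1,0,0) = x (0,1,0) = x (0,0,1) = x (1,1,1) = 2`
and `x α = 0` otherwise, one has `2·tᵢ = Σ αᵢ·x α` for `i = 1,2,3`, and for every
nonzero `g` the integer `2·(g₁+g₂+g₃) − Σ ⌊(g₁·α₁ + g₂·α₂ + g₃·α₃)/2⌋·x α` equals
`4` if `g = (1,1,1)` and `2` otherwise.  (This is the degree-8 cover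
`z₁² = a₁a₄, z₂² = a₂a₄, z₃² = a₃a₄`.) -/
theorem canonical_cover_solution_Z2pow3 :
    let x : (Fin 3 → Fin 2) → ℕ :=
      fun α => if α = ![1, 0, 0] ∨ α = ![0, 1, 0] ∨ α = ![0, 0, 1] ∨ α = ![1, 1, 1]
        then 2 else 0
    (∀ i : Fin 3, 2 * (2 : ℤ) = ∑ α : Fin 3 → Fin 2, ((α i).val : ℤ) * (x α : ℤ)) ∧
    (∀ g : Fin 3 → Fin 2, g ≠ 0 →
      2 * (((g 0).val : ℤ) + ((g 1).val : ℤ) + ((g 2).val : ℤ))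
          - ∑ α : Fin 3 → Fin 2,
              ⌊(((g 0).val : ℚ) * ((α 0).val : ℚ) + ((g 1).val : ℚ) * ((α 1).val : ℚ)
                  + ((g 2).val : ℚ) * ((α 2).val : ℚ)) / 2⌋ * (x α : ℤ)
        = if g = ![1, 1, 1] then 4 else 2) := by
  intro x
  have hx : ∀ α : Fin 3 → Fin 2,
      x α = if α = ![1, 0, 0] ∨ α = ![0, 1, 0] ∨ α = ![0, 0, 1] ∨ α = ![1, 1, 1]
        then 2 else 0 := fun _ => rfl
  refine ⟨by decide, ?_⟩
  intro g hg
  have h2 : ∀ a : Fin 2, a = 0 ∨ a = 1 := by decide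
  have hgeq : g = ![g 0, g 1, g 2] := by
    funext i; fin_cases i <;> rfl
  have hx000 : x ![0,0,0] = 0 := by rw [hx]; decide
  have hx001 : x ![0,0,1] = 2 := by rw [hx]; decide
  have hx010 : x ![0,1,0] = 2 := by rw [hx]; decide
  have hx011 : x ![0,1,1] = 0 := by rw [hx]; decide
  have hx100 : x ![1,0,0] = 2 := by rw [hx]; decide
  have hx101 : x ![1,0,1] = 0 := by rw [hx]; decide
  have hx110 : x ![1,1,0] = 0 := by rw [hx]; decide
  have hx111 : x ![1,1,1] = 2 := by rw [hx]; decide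
  rcases h2 (g 0) with h0 | h0 <;> rcases h2 (g 1) with h1 | h1 <;>
    rcases h2 (g 2) with hh2 | hh2 <;>
  · rw [h0, h1, hh2] at hgeq
    rw [hgeq] at hg ⊢
    first
    | exact absurd (by decide) hg
    | · rw [sum8_fin3fin2, hx000, hx001, hx010, hx011, hx100, hx101, hx110, hx111]
        first | rw [if_pos rfl] | rw [if_neg (by decide)]
        norm_num [Matrix.cons_val_two, Matrix.tail_cons, Matrix.head_cons]
end

section
/- For the cyclic group G = ℤ/8 (with k = 1, n₁ = 8), the canonical-cover Diophantine system has no solution: there are no nonnegative integers x₀,...,x₇, integer t₁, and g' ∈ {1,...,7} such that 8·t₁ = Σ_{α=0}^{7} α·x_α and, for every g ∈ {1,...,7}, the integer g·t₁ − Σ_{α=0}^{7} ⌊g·α/8⌋·x_α equals 4 if g = g' and 2 otherwise. -/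
/-- For the cyclic group `ℤ/8`, the canonical-cover Diophantine system has no solution:
there are no nonnegative integers `x α` (`α = 0,...,7`), integer `t`, and nonzero
`g'` such that `8·t = Σ α·x α` and, for every nonzero `g`, the integer
`g·t − Σ ⌊g·α/8⌋·x α` equals `4` if `g = g'` and `2` otherwise. -/
theorem no_canonical_cover_solution_Z8 :
    ¬ ∃ (x : Fin 8 → ℕ) (t : ℤ) (g' : Fin 8),
        g' ≠ 0 ∧
        (8 * t = ∑ α : Fin 8, (α.val : ℤ) * (x α : ℤ)) ∧
        (∀ g : Fin 8, g ≠ 0 →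
          (g.val : ℤ) * t
              - ∑ α : Fin 8, ⌊((g.val : ℚ) * (α.val : ℚ)) / 8⌋ * (x α : ℤ)
            = if g = g' then 4 else 2) := by
  rintro ⟨x, t, g', hg', ht, h⟩
  have h1 := h 1 (by decide)
  have h2 := h 2 (by decide)
  have h3 := h 3 (by decide)
  have h4 := h 4 (by decide)
  have h5 := h 5 (by decide)
  have h6 := h 6 (by decide)
  have h7 := h 7 (by decide)
  simp only [Fin.sum_univ_eight, show ((3:Fin 8).val) = 3 from rfl,
    show ((4:Fin 8).val) = 4 from rfl, show ((5:Fin 8).val) = 5 from rfl,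
    show ((6:Fin 8).val) = 6 from rfl, show ((7:Fin 8).val) = 7 from rfl,
    show ((1:Fin 8).val) = 1 from rfl, show ((2:Fin 8).val) = 2 from rfl,
    show ((0:Fin 8).val) = 0 from rfl] at h1 h2 h3 h4 h5 h6 h7 ht
  norm_num at h1 h2 h3 h4 h5 h6 h7 ht
  fin_cases g' <;> simp_all <;> omega
end

section
/- For the group G = ℤ/2 ⊕ ℤ/3 (cyclic of order 6), the canonical-cover Diophantine system has a solution. Explicitly, taking g' = (1,1), t₁ = t₂ = 2, and x_{(1,0)} = x_{(1,1)} = x_{(0,2)} = 2 with x_α = 0 for all other α ∈ ℤ/2 × ℤ/3, one has 2·t₁ = Σ_α α₁·x_α, 3·t₂ = Σ_α α₂·x_α, and for every nonzero (g₁,g₂) the integer 2·g₁ + 2·g₂ − Σ_α ⌊(3·g₁·α₁ + 2·g₂·α₂)/6⌋·x_α equals 4 if (g₁,g₂) = (1,1) and 2 otherwise. -/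
/-- For `G = ℤ/2 ⊕ ℤ/3` (cyclic of order 6), the canonical-cover Diophantine system
has a solution: with `g' = (1,1)`, `t₁ = t₂ = 2`, `x (1,0) = x (1,1) = x (0,2) = 2`
and `x α = 0` otherwise, one has `2·t₁ = Σ α₁·x α`, `3·t₂ = Σ α₂·x α`, and for every
nonzero `(g₁,g₂)` the integer `2·g₁ + 2·g₂ − Σ ⌊(3·g₁·α₁ + 2·g₂·α₂)/6⌋·x α` equals
`4` if `(g₁,g₂) = (1,1)` and `2` otherwise.  (This is the degree-6 cover
`z₁² = a₁a₂, z₂³ = a₂a₃²`.) -/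
theorem canonical_cover_solution_Z2xZ3 :
    let x : Fin 2 × Fin 3 → ℕ :=
      fun α => if α = (1, 0) ∨ α = (1, 1) ∨ α = (0, 2) then 2 else 0
    (2 * (2 : ℤ) = ∑ α : Fin 2 × Fin 3, (α.1.val : ℤ) * (x α : ℤ)) ∧
    (3 * (2 : ℤ) = ∑ α : Fin 2 × Fin 3, (α.2.val : ℤ) * (x α : ℤ)) ∧
    (∀ g : Fin 2 × Fin 3, g ≠ 0 →
      2 * (g.1.val : ℤ) + 2 * (g.2.val : ℤ)
          - ∑ α : Fin 2 × Fin 3,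
              ⌊(3 * (g.1.val : ℚ) * (α.1.val : ℚ)
                  + 2 * (g.2.val : ℚ) * (α.2.val : ℚ)) / 6⌋ * (x α : ℤ)
        = if g = ((1 : Fin 2), (1 : Fin 3)) then 4 else 2) := by
  intro x
  refine ⟨?_, ?_, ?_⟩
  · norm_num [Fintype.sum_prod_type, Fin.sum_univ_succ, x, Prod.ext_iff]
    decide
  · norm_num [Fintype.sum_prod_type, Fin.sum_univ_succ, x, Prod.ext_iff]
    decide
  · intro g hg
    fin_cases g <;> simp only [x] <;>
      norm_num [Fintype.sum_prod_type, Fin.sum_univ_succ, Prod.ext_iff] <;>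
      norm_num [Int.floor_eq_iff, show (0:ℚ) ≤ 6 by norm_num] <;>
      first
        | exact hg rfl
        | decide
end

section
/- For the cyclic group G = ℤ/5 (with k = 1, n₁ = 5), the canonical-cover Diophantine system has no solution: there are no nonnegative integers x₀,...,x₄, integer t₁, and g' ∈ {1,...,4} such that 5·t₁ = Σ_{α=0}^{4} α·x_α and, for every g ∈ {1,...,4}, the integer g·t₁ − Σ_{α=0}^{4} ⌊g·α/5⌋·x_α equals 4 if g = g' and 2 otherwise. Consequently a degree-5 abelian (cyclic) cover of ℙ² cannot be a canonical map. -/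
/-- For the cyclic group `ℤ/5`, the canonical-cover Diophantine system has no solution:
there are no nonnegative integers `x α` (`α = 0,...,4`), integer `t`, and nonzero
`g'` such that `5·t = Σ α·x α` and, for every nonzero `g`, the integer
`g·t − Σ ⌊g·α/5⌋·x α` equals `4` if `g = g'` and `2` otherwise. -/
theorem no_canonical_cover_solution_Z5 :
    ¬ ∃ (x : Fin 5 → ℕ) (t : ℤ) (g' : Fin 5),
        g' ≠ 0 ∧
        (5 * t = ∑ α : Fin 5, (α.val : ℤ) * (x α : ℤ)) ∧
        (∀ g : Fin 5, g ≠ 0 →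
          (g.val : ℤ) * t
              - ∑ α : Fin 5, ⌊((g.val : ℚ) * (α.val : ℚ)) / 5⌋ * (x α : ℤ)
            = if g = g' then 4 else 2) := by
  rintro ⟨x, t, g', hg', hsum, hL⟩
  have h1 := hL 1 (by decide)
  have h2 := hL 2 (by decide)
  have h3 := hL 3 (by decide)
  have h4 := hL 4 (by decide)
  simp only [Fin.sum_univ_five] at hsum h1 h2 h3 h4
  norm_num [show ((3:Fin 5)).val = 3 from rfl, show ((4:Fin 5)).val = 4 from rfl,
    show ((2:Fin 5)).val = 2 from rfl, show ((1:Fin 5)).val = 1 from rfl] at hsum h1 h2 h3 h4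
  fin_cases g' <;> simp_all <;> omega
end
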